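/- arXiv:2602.12736 — 2 statements merged into one kernel-verified Lean document; each statement's English description precedes it below -/
import Mathlib

section
/- In any H-bootstrap process on G with running time τ ≥ 1, there exists an H-chain of length τ: a sequence (Hᵢ, eᵢ) for i ∈ [τ] where each Hᵢ is a copy of H in G_τ, eᵢ ∈ E(Hᵢ) is an edge added at time exactly i, and eᵢ ∈ E(Hᵢ) ∩ E(Hᵢ₊₁) for i < τ. -/
open SimpleGraph Finset

/-- `f` maps `H` to a copy of `H` inside `G`. -/
def IsCopyOf {α V : Type*} (H : SimpleGraph α) (G : SimpleGraph V) (f : α → V) : Prop :=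
  Function.Injective f ∧ ∀ a b, H.Adj a b → G.Adj (f a) (f b)

/-- One round of the `H`-bootstrap process: add every edge whose addition
creates a new copy of `H` (i.e. the edge is the last missing edge of a copy of `H`). -/
def bootStep {α V : Type*} (H : SimpleGraph α) (G : SimpleGraph V) : SimpleGraph V where
  Adj u v := G.Adj u v ∨ (u ≠ v ∧ ∃ f : α → V,
      IsCopyOf H (G ⊔ SimpleGraph.fromEdgeSet {s(u, v)}) f ∧
      ∃ a b, H.Adj a b ∧ f a = u ∧ f b = v)
  symm := by
    constructor
    intro u v h
    rcases h with h | ⟨hne, f, hf, a, b, hab, hfa, hfb⟩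
    · exact Or.inl h.symm
    · refine Or.inr ⟨hne.symm, f, ?_, b, a, hab.symm, hfb, hfa⟩
      rwa [Sym2.eq_swap]
  loopless := by
    constructor
    intro u h
    rcases h with h | ⟨hne, _⟩
    · exact G.irrefl h
    · exact hne rfl

/-- The `H`-bootstrap process on starting graph `G`. -/
def bootProc {α V : Type*} (H : SimpleGraph α) (G : SimpleGraph V) : ℕ → SimpleGraph V
  | 0 => G
  | (n + 1) => bootStep H (bootProc H G n)

/-- The running time of the `H`-process on `G`: the least `t` with `G_{t+1} = G_t`. -/
noncomputable def bootRunTime {α V : Type*} (H : SimpleGraph α) (G : SimpleGraph V) : ℕ :=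
  sInf {t | bootProc H G (t + 1) = bootProc H G t}

/-- The final (stabilised) graph of the `H`-process on `G`. -/
noncomputable def bootFinal {α V : Type*} (H : SimpleGraph α) (G : SimpleGraph V) :
    SimpleGraph V :=
  bootProc H G (bootRunTime H G)

/-! If an edge `e` is added at time `n + 2`, its witnessing copy of `H` in `G_{n+1} + e` cannot
already lie in `G_n + e`, for then `e` would have been added at time `n + 1`; so some edge of that
copy was added at time exactly `n + 1`. Starting from an edge added at the last time `τ` and
stepping back in this way `τ - 1` times yields the chain. -/

universe u v

namespace IsCopyOf

variable {α : Type u} {V : Type v} {H : SimpleGraph α} {K K' : SimpleGraph V} {f : α → V}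

lemma mono (hf : IsCopyOf H K f) (h : K ≤ K') : IsCopyOf H K' f :=
  ⟨hf.1, fun a b hab => h (hf.2 a b hab)⟩

end IsCopyOf

section BootstrapChain

variable {α : Type u} {V : Type v} (H : SimpleGraph α)

def IsEdgeOfCopy (f : α → V) (e : Sym2 V) : Prop :=
  ∃ a b, H.Adj a b ∧ e = s(f a, f b)

lemma mem_bootStep_edgeSet_iff (K : SimpleGraph V) (e : Sym2 V) :
    e ∈ (bootStep H K).edgeSet ↔ e ∈ K.edgeSet ∨
      ∃ f, IsCopyOf H (K ⊔ fromEdgeSet {e}) f ∧ IsEdgeOfCopy H f e := by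
  induction e using Sym2.ind with
  | _ u v =>
    constructor
    · rintro (h | ⟨-, f, hf, a, b, hab, rfl, rfl⟩)
      · exact Or.inl h
      · exact Or.inr ⟨f, hf, a, b, hab, rfl⟩
    · rintro (h | ⟨f, hf, a, b, hab, huv⟩)
      · exact Or.inl h
      · have hadj : (bootStep H K).Adj (f a) (f b) :=
          Or.inr ⟨(hf.2 a b hab).ne, f, huv ▸ hf, a, b, hab, rfl, rfl⟩
        rwa [huv]

lemma le_bootStep (K : SimpleGraph V) : K ≤ bootStep H K := fun _ _ h => Or.inl h

lemma sup_fromEdgeSet_le_bootStep {K : SimpleGraph V} {e : Sym2 V}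
    (he : e ∈ (bootStep H K).edgeSet) : K ⊔ fromEdgeSet {e} ≤ bootStep H K :=
  sup_le (le_bootStep H K) (by simp [he])

lemma exists_isEdgeOfCopy_mem_bootStep_of_notMem {K : SimpleGraph V} {f : α → V} {e : Sym2 V}
    (hf : IsCopyOf H (bootStep H K ⊔ fromEdgeSet {e}) f) (he : IsEdgeOfCopy H f e)
    (hnot : e ∉ (bootStep H K).edgeSet) :
    ∃ e', IsEdgeOfCopy H f e' ∧ e' ∈ (bootStep H K).edgeSet ∧ e' ∉ K.edgeSet := by
  by_contra! hcon
  have hfK : IsCopyOf H (K ⊔ fromEdgeSet {e}) f := by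
    refine ⟨hf.1, fun a b hab => ?_⟩
    rcases hf.2 a b hab with h | h
    · exact Or.inl (hcon _ ⟨a, b, hab, rfl⟩ h)
    · exact Or.inr h
  exact hnot ((mem_bootStep_edgeSet_iff H K e).mpr (Or.inr ⟨f, hfK, he⟩))

variable (G : SimpleGraph V)

lemma bootProc_mono : Monotone (bootProc H G) :=
  monotone_nat_of_le_succ fun n => le_bootStep H (bootProc H G n)

lemma exists_mem_bootProc_succ_notMem_of_lt_bootRunTime {n : ℕ} (hn : n < bootRunTime H G) :
    ∃ e, e ∈ (bootProc H G (n + 1)).edgeSet ∧ e ∉ (bootProc H G n).edgeSet := by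
  have hne : bootProc H G (n + 1) ≠ bootProc H G n := Nat.notMem_of_lt_sInf hn
  have hlt : bootProc H G n < bootProc H G (n + 1) :=
    lt_of_le_of_ne (bootProc_mono H G n.le_succ) hne.symm
  exact Set.exists_of_ssubset (edgeSet_ssubset_edgeSet.mpr hlt)

def IsHChain (n : ℕ) (f : ℕ → α → V) (e : ℕ → Sym2 V) : Prop :=
  ∀ i ∈ Icc 1 n,
    IsCopyOf H (bootProc H G i) (f i) ∧ IsEdgeOfCopy H (f i) (e i) ∧
      e i ∈ (bootProc H G i).edgeSet ∧ e i ∉ (bootProc H G (i - 1)).edgeSet ∧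
      (i < n → IsEdgeOfCopy H (f (i + 1)) (e i))

variable {H G}

lemma IsHChain.snoc {n : ℕ} {f : ℕ → α → V} {e : ℕ → Sym2 V} (hc : IsHChain H G n f e)
    {f' : α → V} {e' : Sym2 V} (hf' : IsCopyOf H (bootProc H G (n + 1)) f')
    (he' : IsEdgeOfCopy H f' e') (hmem : e' ∈ (bootProc H G (n + 1)).edgeSet)
    (hnot : e' ∉ (bootProc H G n).edgeSet) (hlink : 1 ≤ n → IsEdgeOfCopy H f' (e n)) :
    IsHChain H G (n + 1) (Function.update f (n + 1) f') (Function.update e (n + 1) e') := by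
  intro i hi
  obtain ⟨hi1, hin⟩ := mem_Icc.mp hi
  rcases hin.lt_or_eq with hlt | rfl
  · have hi' : i ≠ n + 1 := hlt.ne
    obtain ⟨hfi, hei, hmemi, hnoti, hlinki⟩ := hc i (mem_Icc.mpr ⟨hi1, Nat.lt_succ_iff.mp hlt⟩)
    simp only [Function.update_of_ne hi']
    refine ⟨hfi, hei, hmemi, hnoti, fun _ => ?_⟩
    rcases (Nat.lt_succ_iff.mp hlt).lt_or_eq with hlt' | rfl
    · rw [Function.update_of_ne (by omega)]
      exact hlinki hlt'
    · rw [Function.update_self]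
      exact hlink hi1
  · simp only [Function.update_self, Nat.add_sub_cancel, lt_irrefl, IsEmpty.forall_iff, and_true]
    exact ⟨hf', he', hmem, hnot⟩

lemma exists_copy_of_mem_bootProc_succ {n : ℕ} {e₀ : Sym2 V}
    (hmem : e₀ ∈ (bootProc H G (n + 1)).edgeSet) (hnot : e₀ ∉ (bootProc H G n).edgeSet) :
    ∃ f₀, IsCopyOf H (bootProc H G n ⊔ fromEdgeSet {e₀}) f₀ ∧ IsEdgeOfCopy H f₀ e₀ :=
  ((mem_bootStep_edgeSet_iff H _ e₀).mp hmem).resolve_left hnot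

lemma exists_isHChain_of_mem_bootProc_succ (n : ℕ) {e₀ : Sym2 V}
    (hmem : e₀ ∈ (bootProc H G (n + 1)).edgeSet) (hnot : e₀ ∉ (bootProc H G n).edgeSet) :
    ∃ f e, IsHChain H G (n + 1) f e ∧ e (n + 1) = e₀ := by
  induction n generalizing e₀ with
  | zero =>
    obtain ⟨f₀, hf₀, he₀⟩ := exists_copy_of_mem_bootProc_succ hmem hnot
    have hc : IsHChain H G 0 (fun _ => f₀) (fun _ => e₀) := fun i hi => by simp at hi
    exact ⟨_, _, hc.snoc (hf₀.mono (sup_fromEdgeSet_le_bootStep H hmem)) he₀ hmem hnot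
      (by omega), Function.update_self ..⟩
  | succ m ih =>
    obtain ⟨f₀, hf₀, he₀⟩ := exists_copy_of_mem_bootProc_succ hmem hnot
    obtain ⟨e', he', hmem', hnot'⟩ := exists_isEdgeOfCopy_mem_bootStep_of_notMem H hf₀ he₀ hnot
    obtain ⟨f, e, hc, rfl⟩ := ih hmem' hnot'
    exact ⟨_, _, hc.snoc (hf₀.mono (sup_fromEdgeSet_le_bootStep H hmem)) he₀ hmem hnot
      (fun _ => he'), Function.update_self ..⟩

end BootstrapChain

/-- In any `H`-process with running time `τ ≥ 1` there is an `H`-chain of length `τ`: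
copies `Hᵢ` of `H` in `G_τ` (given by injective homomorphisms `f i`) together with
edges `e i ∈ E(Hᵢ)` added at time exactly `i`, with `e i ∈ E(Hᵢ) ∩ E(Hᵢ₊₁)` for `i < τ`. -/
theorem stmt_9 {α V : Type*} (H : SimpleGraph α) (G : SimpleGraph V)
    (τ : ℕ) (hτ : 1 ≤ τ) (hrun : bootRunTime H G = τ) :
    ∃ (f : ℕ → α → V) (e : ℕ → Sym2 V),
      ∀ i ∈ Finset.Icc 1 τ,
        (Function.Injective (f i) ∧
          ∀ a b, H.Adj a b → (bootProc H G τ).Adj (f i a) (f i b)) ∧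
        (∃ a b, H.Adj a b ∧ e i = s(f i a, f i b)) ∧
        e i ∈ (bootProc H G i).edgeSet ∧
        e i ∉ (bootProc H G (i - 1)).edgeSet ∧
        (i < τ → ∃ a b, H.Adj a b ∧ e i = s(f (i + 1) a, f (i + 1) b)) := by
  obtain ⟨n, rfl⟩ := Nat.exists_eq_add_of_le' hτ
  obtain ⟨e₀, hmem, hnot⟩ :=
    exists_mem_bootProc_succ_notMem_of_lt_bootRunTime H G (hrun ▸ n.lt_add_one)
  obtain ⟨f, e, hc, -⟩ := exists_isHChain_of_mem_bootProc_succ n hmem hnot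
  refine ⟨f, e, fun i hi => ?_⟩
  obtain ⟨hfi, hei, hmemi, hnoti, hlinki⟩ := hc i hi
  exact ⟨hfi.mono (bootProc_mono H G (mem_Icc.mp hi).2), hei, hmemi, hnoti, hlinki⟩
end

section
/- For the path P_t on t ≥ 2 vertices, the maximum running time of the P_t-bootstrap process on n-vertex graphs satisfies M_{P_t}(n) ≤ 3. -/
open SimpleGraph Finset

/-!
A path on `t` vertices is encoded as a duplicate-free list whose consecutive entries are adjacent.
If round one adds an edge, the copy of `P_t` it completes is a path `w₀ … w_{t-1}` of `G₁`.
In round two `w₀` becomes adjacent to every other vertex `v`: if `v = w_j`, the rotated path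
`w_{j-1} … w₀ w_j … w_{t-1}` misses only the edge `w₀ w_j`; otherwise `v w₀ … w_{t-2}`
misses only `v w₀`. Once `w₀` is universal, every vertex `u` starts a path on `t` vertices
(for `u = w_i` take `w_i … w₀ w_{t-1} … w_{i+1}`, otherwise `u w₀ … w_{t-2}`), so by the
same argument every vertex becomes universal in round three: `G₃` is complete.
-/

variable {α V : Type*}

theorem IsCopyOf.mono_s12 {H : SimpleGraph α} {G G' : SimpleGraph V} {f : α → V} (hGG' : G ≤ G')
    (hf : IsCopyOf H G f) : IsCopyOf H G' f :=
  ⟨hf.1, fun a b hab => hGG' (hf.2 a b hab)⟩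

theorem List.IsChain.reverse_of_symm {R : α → α → Prop} {l : List α}
    (hR : Std.Symm R) (h : l.IsChain R) : l.reverse.IsChain R :=
  List.isChain_reverse.2 (h.imp fun _ _ hab => hR.symm _ _ hab)

theorem isCopyOf_pathGraph_iff {t : ℕ} {G : SimpleGraph V} {f : Fin t → V} :
    IsCopyOf (pathGraph t) G f ↔ (List.ofFn f).Nodup ∧ (List.ofFn f).IsChain G.Adj := by
  rw [List.nodup_ofFn, List.isChain_ofFn]
  refine and_congr_right fun _ => ⟨fun h i hi => h _ _ (by simp [pathGraph_adj]), ?_⟩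
  rintro h ⟨a, ha⟩ ⟨b, hb⟩ hab
  rcases pathGraph_adj.1 hab with rfl | rfl
  · exact h a hb
  · exact (h b ha).symm

section Bootstrap

variable {H : SimpleGraph α} {G : SimpleGraph V}

theorem le_bootStep_s12 : G ≤ bootStep H G := fun _ _ => Or.inl

theorem bootStep_top : bootStep H (⊤ : SimpleGraph V) = ⊤ :=
  le_antisymm le_top le_bootStep_s12

theorem bootStep_adj_of_isCopyOf {f : α → V} {u v : V} {a b : α}
    (hf : IsCopyOf H (G ⊔ fromEdgeSet {s(u, v)}) f) (hab : H.Adj a b) (ha : f a = u)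
    (hb : f b = v) : (bootStep H G).Adj u v :=
  Or.inr ⟨ha ▸ hb ▸ hf.1.ne hab.ne, f, hf, a, b, hab, ha, hb⟩

theorem exists_isCopyOf_bootStep_of_ne (h : bootStep H G ≠ G) :
    ∃ f : α → V, IsCopyOf H (bootStep H G) f := by
  obtain ⟨u, v, huv, hG⟩ : ∃ u v, (bootStep H G).Adj u v ∧ ¬ G.Adj u v := by
    by_contra! hc
    exact h (le_antisymm hc le_bootStep_s12)
  obtain hG' | ⟨-, f, hf, -⟩ := id huv
  · exact absurd hG' hG
  refine ⟨f, hf.mono_s12 (sup_le le_bootStep_s12 ((fromEdgeSet_le _).2 ?_))⟩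
  simp [huv]

theorem bootRunTime_le_of_bootProc_succ_eq {k : ℕ} (h : bootProc H G (k + 1) = bootProc H G k) :
    bootRunTime H G ≤ k :=
  Nat.sInf_le h

theorem bootRunTime_le_of_bootProc_eq_top {k : ℕ} (h : bootProc H G k = ⊤) :
    bootRunTime H G ≤ k :=
  bootRunTime_le_of_bootProc_succ_eq (show bootStep H (bootProc H G k) = _ by rw [h, bootStep_top])

end Bootstrap

section PathProcess

variable {G : SimpleGraph V}

theorem bootStep_pathGraph_adj_of_isChain {t : ℕ} {l₁ l₂ : List V} {x y : V}
    (hnd : (l₁ ++ x :: y :: l₂).Nodup) (hlen : (l₁ ++ x :: y :: l₂).length = t)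
    (h₁ : (l₁ ++ [x]).IsChain G.Adj) (h₂ : (y :: l₂).IsChain G.Adj) :
    (bootStep (pathGraph t) G).Adj x y := by
  subst hlen
  set l := l₁ ++ x :: y :: l₂
  have hxy : x ≠ y := by
    simp [l, List.nodup_append] at hnd
    tauto
  have hc : l.IsChain (G ⊔ fromEdgeSet {s(x, y)}).Adj := by
    have : l = (l₁ ++ [x]) ++ (y :: l₂) := by simp [l]
    rw [this]
    refine (h₁.imp fun _ _ h => Or.inl h).append (h₂.imp fun _ _ h => Or.inl h) ?_
    simp [hxy]
  have hf : IsCopyOf (pathGraph l.length) (G ⊔ fromEdgeSet {s(x, y)})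
      (fun i : Fin l.length => l[i.1]) :=
    isCopyOf_pathGraph_iff.2 (by rw [List.ofFn_getElem]; exact ⟨hnd, hc⟩)
  exact bootStep_adj_of_isCopyOf hf (a := ⟨l₁.length, by simp [l]⟩)
    (b := ⟨l₁.length + 1, by simp [l]⟩) (by simp [pathGraph_adj]) (by simp [l]) (by simp [l])


theorem bootStep_pathGraph_adj_of_isChain_cons {t : ℕ} {u v : V} {l : List V}
    (hnd : (u :: l).Nodup) (hc : (u :: l).IsChain G.Adj) (hlen : (u :: l).length = t)
    (ht : 2 ≤ t) (hvu : v ≠ u) : (bootStep (pathGraph t) G).Adj u v := by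
  by_cases hv : v ∈ l
  · obtain ⟨p, q, rfl⟩ := List.append_of_mem hv
    refine bootStep_pathGraph_adj_of_isChain (l₁ := p.reverse) (l₂ := q) ?_ ?_ ?_ ?_
    · have hperm : (p.reverse ++ u :: v :: q).Perm (u :: (p ++ v :: q)) :=
        List.perm_middle.trans (((List.reverse_perm p).append_right _).cons u)
      exact hperm.nodup_iff.2 hnd
    · simp at hlen ⊢; omega
    · exact List.reverse_cons ▸
        (List.IsChain.left_of_append (l₁ := u :: p) hc).reverse_of_symm G.symm
    · exact List.IsChain.right_of_append (l₁ := u :: p) hc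
  · obtain ⟨L, z, rfl⟩ :=
      (List.eq_nil_or_concat' l).resolve_left (by rintro rfl; simp at hlen; omega)
    refine (bootStep_pathGraph_adj_of_isChain (l₁ := []) (l₂ := L) ?_ ?_ ?_ ?_).symm
    · simp_all [List.nodup_append]
    · simp at hlen ⊢; omega
    · simp
    · exact List.IsChain.left_of_append (l₁ := u :: L) hc

theorem exists_isChain_cons_of_forall_adj {w : V} {l : List V} (hnd : (w :: l).Nodup)
    (hc : (w :: l).IsChain G.Adj) (hl : l ≠ []) (hw : ∀ x, x ≠ w → G.Adj w x) (u : V) :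
    ∃ P : List V, (u :: P).Nodup ∧ (u :: P).IsChain G.Adj ∧ P.length = l.length := by
  classical
  by_cases hu : u ∈ w :: l
  · rcases List.mem_cons.1 hu with rfl | hu
    · exact ⟨l, hnd, hc, rfl⟩
    obtain ⟨A, C, rfl⟩ := List.append_of_mem hu
    refine ⟨A.reverse ++ w :: C.reverse, ?_, ?_, by simp⟩
    · exact (List.perm_iff_count.2 fun a => by simp [List.count_cons]; omega).nodup_iff.2 hnd
    · rw [show w :: (A ++ u :: C) = (w :: (A ++ [u])) ++ C by simp] at hc hnd
      rw [show u :: (A.reverse ++ w :: C.reverse) = (w :: (A ++ [u])).reverse ++ C.reverse by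
        simp]
      refine .append (hc.left_of_append.reverse_of_symm G.symm)
        (hc.right_of_append.reverse_of_symm G.symm) ?_
      simp only [List.getLast?_reverse, List.head?_cons, Option.mem_some_iff,
        List.head?_reverse]
      rintro _ rfl y hy
      refine hw y fun hyw => ?_
      exact (List.nodup_append.1 hnd).2.2 w (by simp) y (List.mem_of_getLast? hy) hyw.symm
  · obtain ⟨L, z, rfl⟩ := (List.eq_nil_or_concat' l).resolve_left hl
    refine ⟨w :: L, ?_, ?_, by simp⟩
    · simp_all [List.nodup_append]
    · exact List.isChain_cons_cons.2 ⟨(hw u (List.ne_of_not_mem_cons hu)).symm,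
        List.IsChain.left_of_append (l₁ := w :: L) hc⟩

theorem bootStep_pathGraph_eq_top_of_forall_adj {t : ℕ} {w : V} {l : List V}
    (hnd : (w :: l).Nodup) (hc : (w :: l).IsChain G.Adj) (hlen : (w :: l).length = t)
    (ht : 2 ≤ t) (hw : ∀ x, x ≠ w → G.Adj w x) : bootStep (pathGraph t) G = ⊤ := by
  refine eq_top_iff.2 fun u v huv => ?_
  obtain ⟨P, hPnd, hPc, hPlen⟩ :=
    exists_isChain_cons_of_forall_adj hnd hc (by rintro rfl; simp at hlen; omega) hw u
  exact bootStep_pathGraph_adj_of_isChain_cons hPnd hPc (by simpa [hPlen]) ht huv.ne.symm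

theorem bootStep_bootStep_pathGraph_eq_top {t : ℕ} {l : List V} (hnd : l.Nodup)
    (hc : l.IsChain G.Adj) (hlen : l.length = t) (ht : 2 ≤ t) :
    bootStep (pathGraph t) (bootStep (pathGraph t) G) = ⊤ := by
  obtain ⟨w, l, rfl⟩ := List.exists_cons_of_length_pos (by omega : 0 < l.length)
  exact bootStep_pathGraph_eq_top_of_forall_adj hnd (hc.imp fun _ _ h => le_bootStep_s12 h) hlen ht
    fun x hx => bootStep_pathGraph_adj_of_isChain_cons hnd hc hlen ht hx

end PathProcess

/-- For the path `P_t` on `t ≥ 2` vertices, the `P_t`-bootstrap process on any `n`-vertex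
graph stabilises within 3 rounds: `M_{P_t}(n) ≤ 3`. -/
theorem stmt_12 (t : ℕ) (ht : 2 ≤ t) (n : ℕ) (G : SimpleGraph (Fin n)) :
    bootRunTime (SimpleGraph.pathGraph t) G ≤ 3 := by
  by_cases h : bootStep (pathGraph t) G = G
  · exact (bootRunTime_le_of_bootProc_succ_eq (k := 0) h).trans (by norm_num)
  obtain ⟨f, hf⟩ := exists_isCopyOf_bootStep_of_ne h
  obtain ⟨hnd, hc⟩ := isCopyOf_pathGraph_iff.1 hf
  exact bootRunTime_le_of_bootProc_eq_top
    (bootStep_bootStep_pathGraph_eq_top hnd hc List.length_ofFn ht)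
end
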